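/- arXiv:2108.13595 — 5 statements merged into one kernel-verified Lean document; each statement's English description precedes it below -/
import Mathlib

section
/- With the same connection ∇^{1,α} and brackets as in the affine group setting, the curvature satisfies R(X₁,X₂)X₁ = [((1−α)²L)/4 + L/2]X₂ + (1−α)X₃ and R(X₁,X₂)X₃ = −(1−α)L X₁. -/
theorem affine_SVK1_curvature_X1_X2
    {V : Type*} [AddCommGroup V] [Module ℝ V]
    (L α : ℝ) (hL : 0 < L)
    (X₁ X₂ X₃ : V)
    (nabla : V →ₗ[ℝ] V →ₗ[ℝ] V)
    (bracket : V → V → V)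
    (h11 : nabla X₁ X₁ = 0)
    (h12 : nabla X₁ X₂ = ((1 - α) / 2) • X₃)
    (h13 : nabla X₁ X₃ = -(((1 - α) * L / 2) • X₂))
    (h21 : nabla X₂ X₁ = -(((1 - α) / 2) • X₃))
    (h22 : nabla X₂ X₂ = 0)
    (h23 : nabla X₂ X₃ = ((1 - α) * L / 2) • X₁)
    (h31 : nabla X₃ X₁ = -((L / 2) • X₂) - (1 - α) • X₃)
    (h32 : nabla X₃ X₂ = (L / 2) • X₁)
    (h33 : nabla X₃ X₃ = ((1 - α) * L) • X₁)
    (hb12 : bracket X₁ X₂ = X₃)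
    (hb13 : bracket X₁ X₃ = X₂)
    (hb23 : bracket X₂ X₃ = 0)
    (R : V → V → V → V)
    (hR : ∀ X Y Z : V,
      R X Y Z = nabla X (nabla Y Z) - nabla Y (nabla X Z) - nabla (bracket X Y) Z) :
    R X₁ X₂ X₁ = ((1 - α) ^ 2 * L / 4 + L / 2) • X₂ + (1 - α) • X₃ ∧
    R X₁ X₂ X₃ = -(((1 - α) * L) • X₁) := by
  constructor
  · rw [hR, h21, h11, hb12, map_neg, map_smul, h13, map_zero, h31]
    module
  · rw [hR]; simp only [h23, h13, hb12, map_smul, map_neg, h11, h22, h33]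
    module
end

section
/- With the second kind of deformed Schouten–Van Kampen connection ∇^{2,α} on the affine group, given by ∇_{X₁}X₁=0, ∇_{X₁}X₂=(1/2)X₃, ∇_{X₁}X₃=−(L/2)X₂, ∇_{X₂}X₁=−((1−α)/2)X₃, ∇_{X₂}X₂=0, ∇_{X₂}X₃=((1−α)L/2)X₁, ∇_{X₃}X₁=−((1−α)L/2)X₂−(1−α)X₃, ∇_{X₃}X₂=((1−α)L/2)X₁, ∇_{X₃}X₃=(1−α)L X₁, and brackets [X₁,X₂]=X₃, [X₁,X₃]=X₂, [X₂,X₃]=0, the curvature satisfies R(X₂,X₃)X₂ = −((1−α)²L/4)X₃ and R(X₂,X₃)X₃ = ((1−α)²L²/4)X₂. -/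
theorem affine_SVK2_curvature_X2_X3
    {V : Type*} [AddCommGroup V] [Module ℝ V]
    (L α : ℝ) (hL : 0 < L)
    (X₁ X₂ X₃ : V)
    (nabla : V →ₗ[ℝ] V →ₗ[ℝ] V)
    (bracket : V → V → V)
    (h11 : nabla X₁ X₁ = 0)
    (h12 : nabla X₁ X₂ = (1 / 2 : ℝ) • X₃)
    (h13 : nabla X₁ X₃ = -((L / 2) • X₂))
    (h21 : nabla X₂ X₁ = -(((1 - α) / 2) • X₃))
    (h22 : nabla X₂ X₂ = 0)
    (h23 : nabla X₂ X₃ = ((1 - α) * L / 2) • X₁)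
    (h31 : nabla X₃ X₁ = -(((1 - α) * L / 2) • X₂) - (1 - α) • X₃)
    (h32 : nabla X₃ X₂ = ((1 - α) * L / 2) • X₁)
    (h33 : nabla X₃ X₃ = ((1 - α) * L) • X₁)
    (hb12 : bracket X₁ X₂ = X₃)
    (hb13 : bracket X₁ X₃ = X₂)
    (hb23 : bracket X₂ X₃ = 0)
    (R : V → V → V → V)
    (hR : ∀ X Y Z : V,
      R X Y Z = nabla X (nabla Y Z) - nabla Y (nabla X Z) - nabla (bracket X Y) Z) :
    R X₂ X₃ X₂ = -(((1 - α) ^ 2 * L / 4) • X₃) ∧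
    R X₂ X₃ X₃ = ((1 - α) ^ 2 * L ^ 2 / 4) • X₂ := by
  constructor <;>
  · rw [hR]
    simp only [h22, h23, h32, h33, h21, h31, hb23, map_zero, map_smul, map_neg, map_sub,
      LinearMap.zero_apply, LinearMap.map_smul, smul_zero, smul_sub, smul_neg, smul_smul]
    module
end

section
/- Let γ : [a,b] → M (the affine group, x₁ > 0) be a C² regular curve and for L > 0 set ‖γ̇‖_L² = (γ̇₁/γ₁)² + γ̇₃² + L ω(γ̇(t))², where ω(γ̇(t)) = γ̇₂/γ₁ − γ̇₃. Then lim_{L→∞} (1/√L) ∫_a^b ‖γ̇(t)‖_L dt = ∫_a^b |ω(γ̇(t))| dt. -/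
/-!
Scaling out `√L` turns the integrand into `√(A/L + ω²)` with `A = (γ̇₁/γ₁)² + γ̇₃²`, which
tends pointwise to `|ω|` as `L → ∞` and is dominated by `√(|A| + ω²)` for `L ≥ 1`; on the
compact interval all these functions are continuous, so dominated convergence applies.
-/

open Filter MeasureTheory Set Topology

lemma one_div_sqrt_mul_sqrt_add_mul {L : ℝ} (hL : 0 < L) (x y : ℝ) :
    1 / √L * √(x + L * y) = √(x / L + y) := by
  rw [one_div, ← Real.sqrt_inv, ← Real.sqrt_mul (inv_nonneg.2 hL.le)]
  congr 1
  field_simp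

lemma sqrt_div_add_sq_le {L : ℝ} (hL : 1 ≤ L) (x w : ℝ) :
    √(x / L + w ^ 2) ≤ √(|x| + w ^ 2) := by
  gcongr
  calc x / L ≤ |x| / L := by gcongr; exact le_abs_self x
    _ ≤ |x| := div_le_self (abs_nonneg x) hL

lemma tendsto_sqrt_div_add_sq (x w : ℝ) :
    Tendsto (fun L : ℝ => √(x / L + w ^ 2)) atTop (𝓝 |w|) := by
  have h : Tendsto (fun L : ℝ => x / L + w ^ 2) atTop (𝓝 (0 + w ^ 2)) :=
    (tendsto_const_nhds.div_atTop tendsto_id).add tendsto_const_nhds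
  simpa [Function.comp_def, Real.sqrt_sq_eq_abs] using (Real.continuous_sqrt.tendsto _).comp h

section

variable {a b : ℝ} {μ : Measure ℝ} [IsLocallyFiniteMeasure μ] {A W : ℝ → ℝ}

lemma tendsto_integral_sqrt_div_add_sq (hA : ContinuousOn A (uIcc a b))
    (hW : ContinuousOn W (uIcc a b)) :
    Tendsto (fun L : ℝ => ∫ t in a..b, √(A t / L + W t ^ 2) ∂μ) atTop
      (𝓝 (∫ t in a..b, |W t| ∂μ)) := by
  refine intervalIntegral.tendsto_integral_filter_of_dominated_convergence
    (fun t => √(|A t| + W t ^ 2)) ?_ ?_ ?_ (ae_of_all _ fun t _ => tendsto_sqrt_div_add_sq _ _)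
  · refine Eventually.of_forall fun L => ?_
    exact (((hA.div_const L).add (hW.pow 2)).sqrt.mono uIoc_subset_uIcc).aestronglyMeasurable
      measurableSet_uIoc
  · filter_upwards [eventually_ge_atTop 1] with L hL
    refine ae_of_all _ fun t _ => ?_
    rw [Real.norm_of_nonneg (Real.sqrt_nonneg _)]
    exact sqrt_div_add_sq_le hL _ _
  · exact (hA.abs.add (hW.pow 2)).sqrt.intervalIntegrable

lemma tendsto_one_div_sqrt_mul_integral_sqrt_add_mul_sq (hA : ContinuousOn A (uIcc a b))
    (hW : ContinuousOn W (uIcc a b)) :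
    Tendsto (fun L : ℝ => 1 / √L * ∫ t in a..b, √(A t + L * W t ^ 2) ∂μ) atTop
      (𝓝 (∫ t in a..b, |W t| ∂μ)) := by
  refine (tendsto_integral_sqrt_div_add_sq hA hW).congr' ?_
  filter_upwards [eventually_gt_atTop 0] with L hL
  simp only [← intervalIntegral.integral_const_mul, one_div_sqrt_mul_sqrt_add_mul hL]

end

theorem affine_length_limit_general
    (a b : ℝ) (hab : a ≤ b)
    (γ₁ γ₂ γ₃ : ℝ → ℝ)
    (h₁ : ContDiff ℝ 2 γ₁) (h₂ : ContDiff ℝ 2 γ₂) (h₃ : ContDiff ℝ 2 γ₃)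
    (hpos : ∀ t ∈ Set.Icc a b, 0 < γ₁ t) :
    Tendsto
      (fun L : ℝ => (1 / Real.sqrt L) *
        ∫ t in a..b,
          Real.sqrt ((deriv γ₁ t / γ₁ t) ^ 2 + (deriv γ₃ t) ^ 2 +
            L * (deriv γ₂ t / γ₁ t - deriv γ₃ t) ^ 2))
      atTop
      (nhds (∫ t in a..b, |deriv γ₂ t / γ₁ t - deriv γ₃ t|)) := by
  have hd₁ := (h₁.continuous_deriv (by norm_num)).continuousOn (s := uIcc a b)
  have hd₂ := (h₂.continuous_deriv (by norm_num)).continuousOn (s := uIcc a b)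
  have hd₃ := (h₃.continuous_deriv (by norm_num)).continuousOn (s := uIcc a b)
  have hγ₁ : ∀ t ∈ uIcc a b, γ₁ t ≠ 0 := fun t ht => (hpos t (uIcc_of_le hab ▸ ht)).ne'
  have hγ₁c := h₁.continuous.continuousOn (s := uIcc a b)
  exact tendsto_one_div_sqrt_mul_integral_sqrt_add_mul_sq
    (((hd₁.div hγ₁c hγ₁).pow 2).add (hd₃.pow 2)) ((hd₂.div hγ₁c hγ₁).sub hd₃)

theorem affine_length_limit
    (a b : ℝ) (hab : a ≤ b)
    (γ₁ γ₂ γ₃ : ℝ → ℝ)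
    (h₁ : ContDiff ℝ 2 γ₁) (h₂ : ContDiff ℝ 2 γ₂) (h₃ : ContDiff ℝ 2 γ₃)
    (hpos : ∀ t ∈ Set.Icc a b, 0 < γ₁ t)
    (hreg : ∀ t ∈ Set.Icc a b, (deriv γ₁ t, deriv γ₂ t, deriv γ₃ t) ≠ (0, 0, 0)) :
    Tendsto
      (fun L : ℝ => (1 / Real.sqrt L) *
        ∫ t in a..b,
          Real.sqrt ((deriv γ₁ t / γ₁ t) ^ 2 + (deriv γ₃ t) ^ 2 +
            L * (deriv γ₂ t / γ₁ t - deriv γ₃ t) ^ 2))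
      atTop
      (nhds (∫ t in a..b, |deriv γ₂ t / γ₁ t - deriv γ₃ t|)) :=
  affine_length_limit_general a b hab γ₁ γ₂ γ₃ h₁ h₂ h₃ hpos
end

section
/- Fix real numbers a₁, a₂, b₁, b₂, c₁, c₂, w with w ≠ 0. Define for L > 0: N(L) = (a₁ + L w a₂)² + (b₁ + L w b₂)² + L(c₁ + c₂)² and D(L) = a₀² + b₀² + L w², where a₀, b₀ are fixed reals. Then lim_{L→∞} √(N(L)/D(L)² − S(L)²/D(L)³) = √(a₂² + b₂²)/|w|, where S(L) = a₀(a₁ + L w a₂) + b₀(b₁ + L w b₂) + L w (c₁ + c₂). -/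
set_option maxHeartbeats 1000000


open Filter

theorem curvature_limit_nonhorizontal
    (a₀ b₀ a₁ a₂ b₁ b₂ c₁ c₂ w : ℝ) (hw : w ≠ 0)
    (N : ℝ → ℝ) (D : ℝ → ℝ) (S : ℝ → ℝ)
    (hN : ∀ L, N L = (a₁ + L * w * a₂) ^ 2 + (b₁ + L * w * b₂) ^ 2 + L * (c₁ + c₂) ^ 2)
    (hD : ∀ L, D L = a₀ ^ 2 + b₀ ^ 2 + L * w ^ 2)
    (hS : ∀ L, S L = a₀ * (a₁ + L * w * a₂) + b₀ * (b₁ + L * w * b₂) + L * w * (c₁ + c₂))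
    (hnn : ∀ᶠ L in atTop, 0 ≤ N L / (D L) ^ 2 - (S L) ^ 2 / (D L) ^ 3) :
    Tendsto (fun L : ℝ => Real.sqrt (N L / (D L) ^ 2 - (S L) ^ 2 / (D L) ^ 3))
      atTop (nhds (Real.sqrt (a₂ ^ 2 + b₂ ^ 2) / |w|)) := by
  set F : ℝ → ℝ := fun t =>
    ((a₁ * t + w * a₂) ^ 2 + (b₁ * t + w * b₂) ^ 2 + t * (c₁ + c₂) ^ 2) /
        (((a₀ ^ 2 + b₀ ^ 2) * t + w ^ 2) ^ 2) -
      ((a₀ * (a₁ * t + w * a₂) + b₀ * (b₁ * t + w * b₂) + w * (c₁ + c₂)) ^ 2 * t) /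
        (((a₀ ^ 2 + b₀ ^ 2) * t + w ^ 2) ^ 3) with hF
  have hw2 : (0:ℝ) < w ^ 2 := by positivity
  have hFc : ContinuousAt F 0 := by
    apply ContinuousAt.sub
    · exact ContinuousAt.div (by fun_prop) (by fun_prop) (by simp; positivity)
    · exact ContinuousAt.div (by fun_prop) (by fun_prop) (by simp; positivity)
  have hF0 : F 0 = (a₂ ^ 2 + b₂ ^ 2) / w ^ 2 := by
    simp only [hF, mul_zero, zero_mul, add_zero, zero_add, mul_zero, zero_div, sub_zero]
    field_simp
  have hcomp : Tendsto (fun L : ℝ => F L⁻¹) atTop (nhds ((a₂ ^ 2 + b₂ ^ 2) / w ^ 2)) := by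
    rw [← hF0]
    exact hFc.tendsto.comp tendsto_inv_atTop_zero
  have heq : ∀ᶠ L in atTop, F L⁻¹ = N L / (D L) ^ 2 - (S L) ^ 2 / (D L) ^ 3 := by
    filter_upwards [eventually_gt_atTop (0:ℝ)] with L hL
    have hL0 : L ≠ 0 := ne_of_gt hL
    have hDL : D L ≠ 0 := by rw [hD]; positivity
    have hP : (a₀ ^ 2 + b₀ ^ 2) * L⁻¹ + w ^ 2 ≠ 0 := by positivity
    simp only [hF]
    rw [hN, hS, hD]
    have hDL' : a₀ ^ 2 + b₀ ^ 2 + L * w ^ 2 ≠ 0 := by positivity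
    congr 1
    · rw [div_eq_div_iff (pow_ne_zero 2 hP) (pow_ne_zero 2 hDL')]
      field_simp
    · rw [div_eq_div_iff (pow_ne_zero 3 hP) (pow_ne_zero 3 hDL')]
      field_simp
  have key : Tendsto (fun L : ℝ => N L / (D L) ^ 2 - (S L) ^ 2 / (D L) ^ 3) atTop
      (nhds ((a₂ ^ 2 + b₂ ^ 2) / w ^ 2)) := hcomp.congr' heq
  have := (Real.continuous_sqrt.continuousAt).tendsto.comp key
  have hval : Real.sqrt ((a₂ ^ 2 + b₂ ^ 2) / w ^ 2) = Real.sqrt (a₂ ^ 2 + b₂ ^ 2) / |w| := by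
    rw [Real.sqrt_div (by positivity), Real.sqrt_sq_eq_abs]
  rw [hval] at this
  exact this
end

section
/- For the connection ∇^{1,β} on E(1,1) given by ∇_{X₁}X₁=0, ∇_{X₁}X₂=((1−β)(L−1)/(2L))X₃, ∇_{X₁}X₃=−((1−L)(1−β)/2)X₂, ∇_{X₂}X₁=((1−β)(−L−1)/(2L))X₃, ∇_{X₂}X₂=0, ∇_{X₂}X₃=((1−β)(L+1)/2)X₁, ∇_{X₃}X₁=−((L+1)/2)X₂, ∇_{X₃}X₂=((L+1)/2)X₁, ∇_{X₃}X₃=0, with brackets [X₁,X₂]=X₃, [X₁,X₃]=X₂, [X₂,X₃]=0, the curvature satisfies R(X₁,X₂)X₃ = 0, R(X₁,X₃)X₂ = 0, and R(X₂,X₃)X₁ = 0. -/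
theorem E11_SVK1_curvature_vanishing
    {V : Type*} [AddCommGroup V] [Module ℝ V]
    (L β : ℝ) (hL : 0 < L)
    (X₁ X₂ X₃ : V)
    (nabla : V →ₗ[ℝ] V →ₗ[ℝ] V)
    (bracket : V → V → V)
    (h11 : nabla X₁ X₁ = 0)
    (h12 : nabla X₁ X₂ = ((1 - β) * (L - 1) / (2 * L)) • X₃)
    (h13 : nabla X₁ X₃ = -(((1 - L) * (1 - β) / 2) • X₂))
    (h21 : nabla X₂ X₁ = ((1 - β) * (-L - 1) / (2 * L)) • X₃)
    (h22 : nabla X₂ X₂ = 0)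
    (h23 : nabla X₂ X₃ = ((1 - β) * (L + 1) / 2) • X₁)
    (h31 : nabla X₃ X₁ = -(((L + 1) / 2) • X₂))
    (h32 : nabla X₃ X₂ = ((L + 1) / 2) • X₁)
    (h33 : nabla X₃ X₃ = 0)
    (hb12 : bracket X₁ X₂ = X₃)
    (hb13 : bracket X₁ X₃ = X₂)
    (hb23 : bracket X₂ X₃ = 0)
    (R : V → V → V → V)
    (hR : ∀ X Y Z : V,
      R X Y Z = nabla X (nabla Y Z) - nabla Y (nabla X Z) - nabla (bracket X Y) Z) :
    R X₁ X₂ X₃ = 0 ∧ R X₁ X₃ X₂ = 0 ∧ R X₂ X₃ X₁ = 0 := by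
  refine ⟨?_, ?_, ?_⟩ <;>
    simp [hR, hb12, hb13, hb23, h11, h12, h13, h21, h22, h23, h31, h32, h33,
      map_smul, map_zero]
end
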